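/- Let B, U be positive integers, A ∈ ℂ^{U×B}, δ > 0, ℓ > 0, and let B_ℓ = {x ∈ ℂ^B : |Re(x_b)| ≤ ℓ and |Im(x_b)| ≤ ℓ for all b}. Define f(x) = (1/2)‖A x‖₂², g(x) = −(δ/2)‖x‖₂², and E(x) = f(x) + g(x). Let τ > 0 satisfy τ·‖Aᴴ A‖₂,₂ < 1 and τδ < 1, and let (x^{(t)}) be a sequence in B_ℓ with x^{(t+1)} minimizing x ↦ g(x) + Re⟨Aᴴ A x^{(t)}, x − x^{(t)}⟩ + (1/(2τ))‖x − x^{(t)}‖₂² over x ∈ B_ℓ for every t ≥ 1. If x* is a limit point of (x^{(t)}), then x* minimizes the surrogate at itself, i.e., x* minimizes x ↦ g(x) + Re⟨Aᴴ A x*, x − x*⟩ + (1/(2τ))‖x − x*‖₂² over x ∈ B_ℓ; equivalently, x* is a fixed point of the C2PO iteration and hence a stationary point of E on B_ℓ. -/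

import Mathlib

open Matrix BigOperators

/-- The proximal surrogate minimized at each C2PO iteration, based at y:
g(x) + Re⟨Aᴴ A y, x − y⟩ + (1/(2τ))‖x − y‖₂², with g(x) = −(δ/2)‖x‖₂². -/
noncomputable def c2poSurrogate {B U : ℕ} (A : Matrix (Fin U) (Fin B) ℂ) (δ τ : ℝ)
    (y x : Fin B → ℂ) : ℝ :=
  -(δ / 2) * (∑ b, ‖x b‖ ^ 2) + (star ((Aᴴ * A).mulVec y) ⬝ᵥ (x - y)).re
    + (1 / (2 * τ)) * (∑ b, ‖x b - y b‖ ^ 2)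

/-- The convex envelope B_ℓ = {x ∈ ℂ^B : |Re x_b| ≤ ℓ, |Im x_b| ≤ ℓ}. -/
def boxSet (B : ℕ) (ℓ : ℝ) : Set (Fin B → ℂ) :=
  {x | ∀ b, |(x b).re| ≤ ℓ ∧ |(x b).im| ≤ ℓ}

/-!
C2PO is a forward-backward step for E = f + g, and since τ‖Aᴴ A‖ < 1 the surrogate majorizes E
with slack proportional to ‖x⁽ᵗ⁺¹⁾ − x⁽ᵗ⁾‖₂². Hence E decreases along the iterates by at least a
fixed multiple of the squared step; E is bounded below on the compact box, so the steps tend to 0.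
Along a subsequence x⁽ᵠ⁽ᵏ⁾⁾ → x*, the next iterates then also tend to x*, and the minimality of
x⁽ᵠ⁽ᵏ⁾⁺¹⁾ for the surrogate based at x⁽ᵠ⁽ᵏ⁾⁾ passes to the limit by continuity.
-/

open Filter Topology

section QuadraticForm

variable {ι : Type*} [Fintype ι]

lemma re_star_dotProduct_mulVec_add {M : Matrix ι ι ℂ} (hM : M.IsHermitian) (y d : ι → ℂ) :
    (star (y + d) ⬝ᵥ M *ᵥ (y + d)).re
      = (star y ⬝ᵥ M *ᵥ y).re + 2 * (star (M *ᵥ y) ⬝ᵥ d).re + (star d ⬝ᵥ M *ᵥ d).re := by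
  have hyd : star y ⬝ᵥ M *ᵥ d = star (M *ᵥ y) ⬝ᵥ d := by
    rw [star_mulVec, hM.eq, dotProduct_mulVec]
  have hdy : star d ⬝ᵥ M *ᵥ y = star (star (M *ᵥ y) ⬝ᵥ d) := star_dotProduct d _
  simp only [star_add, mulVec_add, add_dotProduct, dotProduct_add, Complex.add_re, hyd, hdy,
    Complex.star_def, Complex.conj_re]
  ring

lemma re_star_dotProduct_mulVec_le [DecidableEq ι] (M : Matrix ι ι ℂ) (d : ι → ℂ) :
    (star d ⬝ᵥ M *ᵥ d).re ≤ ‖toEuclideanCLM (𝕜 := ℂ) M‖ * ∑ i, ‖d i‖ ^ 2 := by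
  set T := toEuclideanCLM (𝕜 := ℂ) M
  set u := WithLp.toLp 2 d
  have hinner : inner ℂ u (T u) = star d ⬝ᵥ M *ᵥ d := by
    rw [EuclideanSpace.inner_eq_star_dotProduct, toEuclideanCLM_toLp, dotProduct_comm]
  calc (star d ⬝ᵥ M *ᵥ d).re ≤ ‖inner ℂ u (T u)‖ := hinner ▸ Complex.re_le_norm _
    _ ≤ ‖u‖ * ‖T u‖ := norm_inner_le_norm _ _
    _ ≤ ‖u‖ * (‖T‖ * ‖u‖) := by gcongr; exact T.le_opNorm u
    _ = ‖T‖ * ∑ i, ‖d i‖ ^ 2 := by rw [← EuclideanSpace.norm_sq_eq u]; ring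

end QuadraticForm

lemma tendsto_zero_of_le_sub_of_bddBelow {e D : ℕ → ℝ} (hD : ∀ n, 0 ≤ D n)
    (hle : ∀ n, D n ≤ e n - e (n + 1)) (hbdd : BddBelow (Set.range e)) :
    Tendsto D atTop (𝓝 0) := by
  have hanti : Antitone e := antitone_nat_of_succ_le fun n => by linarith [hD n, hle n]
  have he := tendsto_atTop_ciInf hanti hbdd
  have hgap : Tendsto (fun n => e n - e (n + 1)) atTop (𝓝 0) := by
    simpa using he.sub ((tendsto_add_atTop_iff_nat 1).mpr he)
  exact tendsto_of_tendsto_of_tendsto_of_le_of_le tendsto_const_nhds hgap hD hle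

lemma tendsto_zero_of_sum_norm_sq {ι : Type*} [Fintype ι] {v : ℕ → ι → ℂ}
    (hv : Tendsto (fun t => ∑ i, ‖v t i‖ ^ 2) atTop (𝓝 0)) : Tendsto v atTop (𝓝 0) := by
  refine tendsto_pi_nhds.mpr fun i => tendsto_zero_iff_norm_tendsto_zero.mpr ?_
  have hsq : Tendsto (fun t => ‖v t i‖ ^ 2) atTop (𝓝 0) :=
    tendsto_of_tendsto_of_tendsto_of_le_of_le tendsto_const_nhds hv (fun t => sq_nonneg _)
      fun t => Finset.single_le_sum (fun j _ => sq_nonneg ‖v t j‖) (Finset.mem_univ i)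
  simpa [Real.sqrt_sq (norm_nonneg _)] using hsq.sqrt

lemma isCompact_boxSet (B : ℕ) (ℓ : ℝ) : IsCompact (boxSet B ℓ) := by
  have hbox : boxSet B ℓ = Set.univ.pi fun _ => Set.Icc (-ℓ) ℓ ×ℂ Set.Icc (-ℓ) ℓ := by
    ext x
    simp [boxSet, Complex.mem_reProdIm, abs_le]
  rw [hbox]
  exact isCompact_univ_pi fun _ => isCompact_Icc.reProdIm isCompact_Icc

section C2PO

variable {B U : ℕ} (A : Matrix (Fin U) (Fin B) ℂ) (δ τ : ℝ)

/-- E(x) = (1/2)‖A x‖₂² − (δ/2)‖x‖₂², with ‖A x‖₂² = xᴴ (Aᴴ A) x. -/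
noncomputable def c2poEnergy (x : Fin B → ℂ) : ℝ :=
  (1 / 2) * (star x ⬝ᵥ (Aᴴ * A) *ᵥ x).re - (δ / 2) * ∑ b, ‖x b‖ ^ 2

lemma continuous_c2poEnergy : Continuous (c2poEnergy A δ) := by
  unfold c2poEnergy
  simp only [mulVec, dotProduct, Pi.star_apply, Complex.re_sum]
  fun_prop

lemma continuous_c2poSurrogate :
    Continuous fun p : (Fin B → ℂ) × (Fin B → ℂ) => c2poSurrogate A δ τ p.1 p.2 := by
  unfold c2poSurrogate
  simp only [mulVec, dotProduct, Pi.star_apply, Pi.sub_apply, Complex.re_sum]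
  fun_prop

/-- Sufficient decrease: the curvature of f is at most ‖Aᴴ A‖, which the proximal weight 1/(2τ)
of the surrogate dominates. -/
lemma c2poEnergy_add_le (y z : Fin B → ℂ) :
    c2poEnergy A δ z + (1 / (2 * τ) - ‖toEuclideanCLM (𝕜 := ℂ) (Aᴴ * A)‖ / 2)
        * ∑ b, ‖z b - y b‖ ^ 2
      ≤ c2poEnergy A δ y + (c2poSurrogate A δ τ y z - c2poSurrogate A δ τ y y) := by
  have hf := re_star_dotProduct_mulVec_add (isHermitian_conjTranspose_mul_self A) y (z - y)
  have hcurv := re_star_dotProduct_mulVec_le (Aᴴ * A) (z - y)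
  rw [add_sub_cancel] at hf
  simp only [Pi.sub_apply] at hcurv
  simp only [c2poEnergy, c2poSurrogate, hf, sub_self, dotProduct_zero, Complex.zero_re,
    norm_zero, ne_eq, OfNat.ofNat_ne_zero, not_false_eq_true, zero_pow, Finset.sum_const_zero,
    mul_zero, add_zero]
  linarith

lemma tendsto_succ_sub_of_isMin_c2poSurrogate (hτ : 0 < τ)
    (hτA : τ * ‖toEuclideanCLM (𝕜 := ℂ) (Aᴴ * A)‖ < 1) {ℓ : ℝ} {x : ℕ → Fin B → ℂ}
    (hmem : ∀ t, x t ∈ boxSet B ℓ)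
    (hmin : ∀ t ≥ 1, ∀ z ∈ boxSet B ℓ,
      c2poSurrogate A δ τ (x t) (x (t + 1)) ≤ c2poSurrogate A δ τ (x t) z) :
    Tendsto (fun t => x (t + 1) - x t) atTop (𝓝 0) := by
  set L := ‖toEuclideanCLM (𝕜 := ℂ) (Aᴴ * A)‖
  have hc : 0 < 1 / (2 * τ) - L / 2 := by
    rw [sub_pos, div_lt_div_iff₀ two_pos (by positivity)]
    linarith
  have hdesc : ∀ t, (1 / (2 * τ) - L / 2) * ∑ b, ‖x (t + 1 + 1) b - x (t + 1) b‖ ^ 2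
      ≤ c2poEnergy A δ (x (t + 1)) - c2poEnergy A δ (x (t + 1 + 1)) := fun t => by
    have := c2poEnergy_add_le A δ τ (x (t + 1)) (x (t + 1 + 1))
    have := hmin (t + 1) (by omega) (x (t + 1)) (hmem _)
    linarith
  have hbdd : BddBelow (Set.range fun t => c2poEnergy A δ (x (t + 1))) :=
    ((isCompact_boxSet B ℓ).bddBelow_image (continuous_c2poEnergy A δ).continuousOn).mono
      (by rintro _ ⟨t, rfl⟩; exact ⟨_, hmem _, rfl⟩)
  have hgap := tendsto_zero_of_le_sub_of_bddBelow (fun t => by positivity) hdesc hbdd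
  rw [← tendsto_add_atTop_iff_nat 1]
  have hsum := hgap.const_mul (1 / (2 * τ) - L / 2)⁻¹
  simp only [inv_mul_cancel_left₀ hc.ne', mul_zero] at hsum
  exact tendsto_zero_of_sum_norm_sq (by simpa only [Pi.sub_apply] using hsum)

end C2PO

theorem stmt_14_general (B U : ℕ)
    (A : Matrix (Fin U) (Fin B) ℂ) (δ ℓ τ : ℝ)
    (hτ : 0 < τ)
    (hτA : τ * ‖Matrix.toEuclideanCLM (𝕜 := ℂ) (Aᴴ * A)‖ < 1)
    (xseq : ℕ → Fin B → ℂ)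
    (hmem : ∀ t, xseq t ∈ boxSet B ℓ)
    (hmin : ∀ t ≥ 1, ∀ x ∈ boxSet B ℓ,
      c2poSurrogate A δ τ (xseq t) (xseq (t + 1))
        ≤ c2poSurrogate A δ τ (xseq t) x)
    (xstar : Fin B → ℂ)
    (hlim : ∃ φ : ℕ → ℕ, StrictMono φ ∧
      Filter.Tendsto (fun k => xseq (φ k)) Filter.atTop (nhds xstar)) :
    ∀ x ∈ boxSet B ℓ,
      c2poSurrogate A δ τ xstar xstar ≤ c2poSurrogate A δ τ xstar x := by
  intro x hx
  obtain ⟨φ, hφ, hφlim⟩ := hlim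
  have hstep := (tendsto_succ_sub_of_isMin_c2poSurrogate A δ τ hτ hτA hmem hmin).comp
    hφ.tendsto_atTop
  have hshift : Tendsto (fun k => xseq (φ k + 1)) atTop (𝓝 xstar) := by
    simpa only [Function.comp_apply, add_sub_cancel, add_zero] using hφlim.add hstep
  have hcont := continuous_c2poSurrogate A δ τ
  refine le_of_tendsto_of_tendsto
    ((hcont.tendsto (xstar, xstar)).comp (hφlim.prodMk_nhds hshift))
    ((hcont.tendsto (xstar, x)).comp (hφlim.prodMk_nhds tendsto_const_nhds)) ?_
  filter_upwards [eventually_ge_atTop 1] with k hk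
  exact hmin (φ k) (hk.trans hφ.le_apply) x hx

/-- Theorem 2, stationarity: any limit point x* of the C2PO
iterates minimizes the surrogate based at itself over B_ℓ, i.e., x* is a fixed
point of the C2PO iteration. -/
theorem stmt_14 (B U : ℕ) (hB : 0 < B) (hU : 0 < U)
    (A : Matrix (Fin U) (Fin B) ℂ) (δ ℓ τ : ℝ)
    (hδ : 0 < δ) (hℓ : 0 < ℓ) (hτ : 0 < τ)
    (hτA : τ * ‖Matrix.toEuclideanCLM (𝕜 := ℂ) (Aᴴ * A)‖ < 1) (hτδ : τ * δ < 1)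
    (xseq : ℕ → Fin B → ℂ)
    (hmem : ∀ t, xseq t ∈ boxSet B ℓ)
    (hmin : ∀ t ≥ 1, ∀ x ∈ boxSet B ℓ,
      c2poSurrogate A δ τ (xseq t) (xseq (t + 1))
        ≤ c2poSurrogate A δ τ (xseq t) x)
    (xstar : Fin B → ℂ)
    (hlim : ∃ φ : ℕ → ℕ, StrictMono φ ∧
      Filter.Tendsto (fun k => xseq (φ k)) Filter.atTop (nhds xstar)) :
    ∀ x ∈ boxSet B ℓ,
      c2poSurrogate A δ τ xstar xstar ≤ c2poSurrogate A δ τ xstar x :=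
  stmt_14_general B U A δ ℓ τ hτ hτA xseq hmem hmin xstar hlim
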